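/- arXiv:2009.01815 — 6 statements merged into one kernel-verified Lean document; each statement's English description precedes it below -/
import Mathlib

section
/- Let p, q be coprime positive integers with 0 < p < q, and let S = { k/p + j/q : k, j integers, 0 < k < p, 0 < j < q }. Then 1 + (p+q)/(pq) is not an element of S. -/
theorem stmt_1_general (p q : ℕ) (hco : Nat.Coprime p q) :
    1 + ((p : ℚ) + q) / ((p : ℚ) * q) ∉
      {x : ℚ | ∃ k j : ℕ, 0 < k ∧ k < p ∧ 0 < j ∧ j < q ∧
        x = (k : ℚ) / p + (j : ℚ) / q} := by
  rintro ⟨k, j, -, hkp, -, hjq, heq⟩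
  obtain ⟨a, rfl⟩ := Nat.exists_eq_add_of_lt hkp
  obtain ⟨b, rfl⟩ := Nat.exists_eq_add_of_lt hjq
  -- Clearing denominators gives `k q + j p = p q + p + q`, i.e. `(q + 1 - j) p + (p + 1 - k) q = p q`.
  refine hco.mul_add_mul_ne_mul (a := b + 2) (b := a + 2) (by omega) (by omega) ?_
  have hp : ((k + a + 1 : ℕ) : ℚ) ≠ 0 := by positivity
  have hq : ((j + b + 1 : ℕ) : ℚ) ≠ 0 := by positivity
  field_simp at heq
  push_cast at heq
  exact_mod_cast (by linear_combination heq :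
    ((b + 2) * (k + a + 1) + (a + 2) * (j + b + 1) : ℚ) = (k + a + 1) * (j + b + 1))

theorem stmt_1 (p q : ℕ) (hp : 0 < p) (hpq : p < q) (hco : Nat.Coprime p q) :
    1 + ((p : ℚ) + q) / ((p : ℚ) * q) ∉
      {x : ℚ | ∃ k j : ℕ, 0 < k ∧ k < p ∧ 0 < j ∧ j < q ∧
        x = (k : ℚ) / p + (j : ℚ) / q} :=
  stmt_1_general p q hco
end

section
/- Let p, q be coprime positive integers with 0 < p < q, and let S = { k/p + j/q : k, j integers, 0 < k < p, 0 < j < q }. For every integer ℓ with 0 < ℓ < p + q such that p does not divide ℓ and q does not divide ℓ, the number 1 + ℓ/(pq) is an element of S. -/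
theorem stmt_2 (p q : ℕ) (hp : 0 < p) (hpq : p < q) (hco : Nat.Coprime p q)
    (ℓ : ℕ) (hl0 : 0 < ℓ) (hl1 : ℓ < p + q) (hlp : ¬ p ∣ ℓ) (hlq : ¬ q ∣ ℓ) :
    1 + (ℓ : ℚ) / ((p : ℚ) * q) ∈
      {x : ℚ | ∃ k j : ℕ, 0 < k ∧ k < p ∧ 0 < j ∧ j < q ∧
        x = (k : ℚ) / p + (j : ℚ) / q} := by
  haveI : NeZero p := ⟨hp.ne'⟩
  set k : ℕ := ((ℓ : ZMod p) * (q : ZMod p)⁻¹).val with hk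
  have hkp : k < p := ZMod.val_lt _
  have hqu : IsUnit (q : ZMod p) := by
    rw [ZMod.isUnit_iff_coprime]
    exact hco.symm
  have hcast : ((k * q : ℕ) : ZMod p) = ((ℓ : ℕ) : ZMod p) := by
    push_cast
    rw [hk, ZMod.natCast_val, ZMod.cast_id]
    rw [mul_assoc, ZMod.inv_mul_of_unit _ hqu, mul_one]
  have hmod : k * q ≡ ℓ [MOD p] := (ZMod.natCast_eq_natCast_iff _ _ _).1 hcast
  -- k ≠ 0
  have hk0 : 0 < k := by
    rcases Nat.eq_zero_or_pos k with h | h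
    · exfalso
      apply hlp
      have : 0 ≡ ℓ [MOD p] := by simpa [h] using hmod
      simpa [Nat.modEq_zero_iff_dvd] using this.symm
    · exact h
  -- ℓ < k * q
  have hlkq : ℓ < k * q := by
    by_contra hle
    push_neg at hle
    have hd : p ∣ ℓ - k * q := (Nat.modEq_iff_dvd' hle).1 hmod
    have hlt : ℓ - k * q < p := by
      have : q ≤ k * q := Nat.le_mul_of_pos_left q hk0
      omega
    have h0 : ℓ - k * q = 0 := Nat.eq_zero_of_dvd_of_lt hd hlt
    exact hlq ⟨k, by rw [mul_comm]; omega⟩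
  have hkqle : k * q ≤ p * q + ℓ := by
    have : k * q ≤ p * q := Nat.mul_le_mul_right _ hkp.le
    omega
  set N : ℕ := p * q + ℓ - k * q with hN
  have hdvdN : p ∣ N := by
    have h1 : k * q ≡ ℓ + p * q [MOD p] := by
      calc k * q ≡ ℓ [MOD p] := hmod
        _ ≡ ℓ + p * q [MOD p] := by
            exact (Nat.modEq_iff_dvd' (by omega)).2 ⟨q, by omega⟩
    have hle : k * q ≤ ℓ + p * q := by omega
    have := (Nat.modEq_iff_dvd' hle).1 h1
    have hNe : N = ℓ + p * q - k * q := by omega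
    rwa [hNe]
  obtain ⟨j, hj⟩ := hdvdN
  have hq0 : 0 < q := by omega
  have hj0 : 0 < j := by
    rcases Nat.eq_zero_or_pos j with h | h
    · exfalso; rw [h, mul_zero] at hj
      have : k * q ≤ (p - 1) * q := Nat.mul_le_mul_right _ (by omega)
      have : k * q ≤ p * q - q := by
        have := (Nat.sub_one_mul p q)
        omega
      omega
    · exact h
  have hjq : j < q := by
    have hNlt : N < p * q := by omega
    by_contra h
    push_neg at h
    have : p * q ≤ p * j := Nat.mul_le_mul_left _ h
    omega
  refine ⟨k, j, hk0, hkp, hj0, hjq, ?_⟩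
  have hkey : k * q + p * j = p * q + ℓ := by omega
  have hp' : (p : ℚ) ≠ 0 := Nat.cast_ne_zero.2 hp.ne'
  have hq' : (q : ℚ) ≠ 0 := Nat.cast_ne_zero.2 hq0.ne'
  have : ((k * q + p * j : ℕ) : ℚ) = ((p * q + ℓ : ℕ) : ℚ) := Nat.cast_inj.2 hkey
  push_cast at this
  field_simp
  linarith [this]
end

section
/- Let p, q be coprime positive integers with 0 < p < q, and let S = { k/p + j/q : k, j integers, 0 < k < p, 0 < j < q }. For every integer ℓ with 0 < ℓ < pq such that p ∤ ℓ and q ∤ ℓ, exactly one of ℓ/(pq) and 1 + ℓ/(pq) lies in S. -/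
theorem stmt_5 (p q : ℕ) (hp : 0 < p) (hpq : p < q) (hco : Nat.Coprime p q)
    (ℓ : ℕ) (hl0 : 0 < ℓ) (hl1 : ℓ < p * q) (hlp : ¬ p ∣ ℓ) (hlq : ¬ q ∣ ℓ) :
    Xor'
      ((ℓ : ℚ) / ((p : ℚ) * q) ∈
        {x : ℚ | ∃ k j : ℕ, 0 < k ∧ k < p ∧ 0 < j ∧ j < q ∧
          x = (k : ℚ) / p + (j : ℚ) / q})
      (1 + (ℓ : ℚ) / ((p : ℚ) * q) ∈
        {x : ℚ | ∃ k j : ℕ, 0 < k ∧ k < p ∧ 0 < j ∧ j < q ∧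
          x = (k : ℚ) / p + (j : ℚ) / q}) := by
  have hq : 0 < q := lt_trans hp hpq
  have hpQ : (p:ℚ) ≠ 0 := Nat.cast_ne_zero.mpr hp.ne'
  have hqQ : (q:ℚ) ≠ 0 := Nat.cast_ne_zero.mpr hq.ne'
  have mem_iff : ∀ m : ℕ, ((m : ℚ) / ((p : ℚ) * q) ∈
      {x : ℚ | ∃ k j : ℕ, 0 < k ∧ k < p ∧ 0 < j ∧ j < q ∧
          x = (k : ℚ) / p + (j : ℚ) / q}) ↔
      (∃ k j : ℕ, 0 < k ∧ k < p ∧ 0 < j ∧ j < q ∧ m = k * q + j * p) := by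
    intro m
    simp only [Set.mem_setOf_eq]
    constructor
    · rintro ⟨k, j, h1, h2, h3, h4, h5⟩
      refine ⟨k, j, h1, h2, h3, h4, ?_⟩
      have : (m:ℚ) = (k*q + j*p : ℕ) := by
        push_cast
        field_simp at h5
        linarith [h5]
      exact_mod_cast this
    · rintro ⟨k, j, h1, h2, h3, h4, h5⟩
      refine ⟨k, j, h1, h2, h3, h4, ?_⟩
      subst h5
      push_cast
      field_simp
  have snd_eq : (1 + (ℓ : ℚ) / ((p : ℚ) * q)) = ((p*q + ℓ : ℕ) : ℚ) / ((p:ℚ)*q) := by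
    push_cast
    field_simp
  rw [snd_eq, mem_iff, mem_iff]
  haveI : NeZero p := ⟨hp.ne'⟩
  haveI : NeZero q := ⟨hq.ne'⟩
  -- Exclusivity
  have excl : ¬ ((∃ k j : ℕ, 0 < k ∧ k < p ∧ 0 < j ∧ j < q ∧ ℓ = k * q + j * p) ∧
      (∃ k j : ℕ, 0 < k ∧ k < p ∧ 0 < j ∧ j < q ∧ p*q + ℓ = k * q + j * p)) := by
    rintro ⟨⟨k, j, hk1, hk2, hj1, hj2, he⟩, ⟨k', j', hk1', hk2', hj1', hj2', he'⟩⟩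
    -- in ZMod p : k' * q = k * q
    have hz : ((k' : ZMod p)) * q = (k : ZMod p) * q := by
      have e1 : ((p*q + ℓ : ℕ) : ZMod p) = ((k'*q + j'*p : ℕ) : ZMod p) := by rw [he']
      have e2 : ((ℓ : ℕ) : ZMod p) = ((k*q + j*p : ℕ) : ZMod p) := by rw [he]
      push_cast at e1 e2
      simp [ZMod.natCast_self] at e1 e2
      rw [e2] at e1
      exact e1.symm
    have hq_unit : ((q:ℕ) : ZMod p) * ((q:ℕ) : ZMod p)⁻¹ = 1 := ZMod.coe_mul_inv_eq_one q hco.symm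
    have hkk : (k' : ZMod p) = (k : ZMod p) := by
      have := congrArg (· * ((q:ℕ) : ZMod p)⁻¹) hz
      simpa [mul_assoc, hq_unit] using this
    have hkk' : k' = k := by
      have := congrArg ZMod.val hkk
      rwa [ZMod.val_cast_of_lt hk2', ZMod.val_cast_of_lt hk2] at this
    rw [hkk'] at he'
    -- now p*q + j*p = j'*p in ℤ
    have hZ : ((q:ℤ) + j) * p = (j' : ℤ) * p := by
      have e1 : ((p:ℤ)*q + ℓ) = (k:ℤ)*q + j'*p := by exact_mod_cast congrArg (Nat.cast : ℕ → ℤ) he'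
      have e2 : ((ℓ:ℕ):ℤ) = (k:ℤ)*q + j*p := by exact_mod_cast congrArg (Nat.cast : ℕ → ℤ) he
      push_cast at e1 e2
      linarith
    have hpZ : (p:ℤ) ≠ 0 := Int.natCast_ne_zero.mpr hp.ne'
    have : (q:ℤ) + j = j' := mul_right_cancel₀ hpZ hZ
    have : q + j = j' := by exact_mod_cast this
    omega
  -- Existence
  -- construct k
  set kz : ZMod p := (ℓ : ZMod p) * ((q : ZMod p))⁻¹ with hkz
  set k : ℕ := kz.val with hk
  have hkval : (k : ZMod p) = kz := by rw [hk, ZMod.natCast_val, ZMod.cast_id]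
  have hkq : ((k * q : ℕ) : ZMod p) = (ℓ : ZMod p) := by
    push_cast
    rw [hkval, hkz, mul_assoc, mul_comm ((q:ZMod p))⁻¹ _,
      ZMod.coe_mul_inv_eq_one q hco.symm, mul_one]
  have hklt : k < p := ZMod.val_lt kz
  have hkpos : 0 < k := by
    rcases Nat.eq_zero_or_pos k with h0 | h
    · exfalso
      apply hlp
      have : (ℓ : ZMod p) = 0 := by
        rw [← hkq, h0]; push_cast; ring
      exact (ZMod.natCast_eq_zero_iff ℓ p).mp this
    · exact h
  -- construct j
  set jz : ZMod q := (ℓ : ZMod q) * ((p : ZMod q))⁻¹ with hjz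
  set j : ℕ := jz.val with hj
  have hjval : (j : ZMod q) = jz := by rw [hj, ZMod.natCast_val, ZMod.cast_id]
  have hjp : ((j * p : ℕ) : ZMod q) = (ℓ : ZMod q) := by
    push_cast
    rw [hjval, hjz, mul_assoc, mul_comm ((p:ZMod q))⁻¹ _,
      ZMod.coe_mul_inv_eq_one p hco, mul_one]
  have hjlt : j < q := ZMod.val_lt jz
  have hjpos : 0 < j := by
    rcases Nat.eq_zero_or_pos j with h0 | h
    · exfalso
      apply hlq
      have : (ℓ : ZMod q) = 0 := by
        rw [← hjp, h0]; push_cast; ring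
      exact (ZMod.natCast_eq_zero_iff ℓ q).mp this
    · exact h
  -- divisibility
  have hdvdp : (p : ℤ) ∣ ((k*q + j*p : ℕ) : ℤ) - (ℓ : ℤ) := by
    have h1 : ((k*q + j*p : ℕ) : ZMod p) = ((ℓ:ℕ) : ZMod p) := by
      push_cast
      push_cast at hkq
      rw [hkq]; simp
    have h2 := (ZMod.natCast_eq_natCast_iff _ _ _).mp h1
    exact (Nat.modEq_iff_dvd.mp h2.symm)
  have hdvdq : (q : ℤ) ∣ ((k*q + j*p : ℕ) : ℤ) - (ℓ : ℤ) := by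
    have h1 : ((k*q + j*p : ℕ) : ZMod q) = ((ℓ:ℕ) : ZMod q) := by
      push_cast
      push_cast at hjp
      rw [hjp]; simp
    have h2 := (ZMod.natCast_eq_natCast_iff _ _ _).mp h1
    exact (Nat.modEq_iff_dvd.mp h2.symm)
  have hcop : IsCoprime (p:ℤ) (q:ℤ) := by
    rw [Int.isCoprime_iff_gcd_eq_one]
    simpa using hco
  have hdvd : ((p:ℤ)*q) ∣ ((k*q + j*p : ℕ) : ℤ) - (ℓ : ℤ) := hcop.mul_dvd hdvdp hdvdq
  obtain ⟨c, hc⟩ := hdvd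
  -- bounds
  have hub : ((k*q + j*p : ℕ) : ℤ) < 2*((p:ℤ)*q) := by
    push_cast
    have h1 : (k:ℤ) + 1 ≤ (p:ℤ) := by exact_mod_cast hklt
    have h2 : (j:ℤ) + 1 ≤ (q:ℤ) := by exact_mod_cast hjlt
    have hq' : (0:ℤ) < q := by exact_mod_cast hq
    have hp' : (0:ℤ) < p := by exact_mod_cast hp
    nlinarith
  have hlb : (0:ℤ) < ((k*q + j*p : ℕ) : ℤ) := by
    push_cast
    have h1 : (0:ℤ) < (k:ℤ)*q :=
      mul_pos (by exact_mod_cast hkpos) (by exact_mod_cast hq)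
    have h2 : (0:ℤ) ≤ (j:ℤ)*p := by positivity
    linarith
  have hpq' : (0:ℤ) < (p:ℤ)*q := mul_pos (by exact_mod_cast hp) (by exact_mod_cast hq)
  have hl1' : (ℓ:ℤ) < (p:ℤ)*q := by exact_mod_cast hl1
  have hl0' : (0:ℤ) < (ℓ:ℤ) := by exact_mod_cast hl0
  have hc0 : 0 ≤ c := by
    by_contra h
    push_neg at h
    have : c ≤ -1 := by omega
    nlinarith
  have hc1 : c ≤ 1 := by
    by_contra h
    push_neg at h
    have : 2 ≤ c := by omega
    nlinarith
  interval_cases c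
  · -- c = 0 : ℓ = k*q + j*p
    have hl : ℓ = k*q + j*p := by
      have : ((k*q + j*p : ℕ) : ℤ) = (ℓ:ℤ) := by linarith [hc]
      exact_mod_cast this.symm
    exact Or.inl ⟨⟨k, j, hkpos, hklt, hjpos, hjlt, hl⟩, fun hb => excl ⟨⟨k, j, hkpos, hklt, hjpos, hjlt, hl⟩, hb⟩⟩
  · -- c = 1 : p*q + ℓ = k*q + j*p
    have hl : p*q + ℓ = k*q + j*p := by
      have : ((p*q:ℕ):ℤ) + (ℓ:ℤ) = ((k*q + j*p : ℕ) : ℤ) := by push_cast at hc ⊢; linarith [hc]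
      exact_mod_cast this
    exact Or.inr ⟨⟨k, j, hkpos, hklt, hjpos, hjlt, hl⟩, fun ha => excl ⟨ha, ⟨k, j, hkpos, hklt, hjpos, hjlt, hl⟩⟩⟩
end

section
/- For every integer n ≥ 1, with p = 2n+1, q = 4n+6, p' = 2n+3, q' = 4n+2, one has pq = p'q', gcd(p,q) = 1, gcd(p',q') = 1, and ⌊(6n+5)/(4n+6)⌋ + ⌊(6n+5)/(2n+1)⌋ − 4 − ⌊(4n+2)/(2n+3)⌋ = −1. -/
/-! Both pairs have the shape `(a, 2a ± 4)` with `a` odd, hence are coprime; and for `n ≥ 1` the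
three quotients are `1`, `3` and `1`, since `6n+5 = (4n+6) + (2n-1) = 3(2n+1) + 2` and
`4n+2 = (2n+3) + (2n-1)`. -/

theorem Odd.isCoprime_two_mul_add_four_mul_iff {a : ℤ} (ha : Odd a) (k : ℤ) :
    IsCoprime a (2 * a + 4 * k) ↔ IsCoprime a k := by
  have h4 : IsCoprime a 4 := by
    simpa [show (4 : ℤ) = 2 ^ 2 by norm_num] using
      (Int.isCoprime_two_right.2 ha).pow_right (n := 2)
  rw [add_comm, mul_comm 2 a, IsCoprime.add_mul_left_right_iff, IsCoprime.mul_right_iff]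
  exact and_iff_right h4

theorem stmt_9 (n : ℤ) (hn : 1 ≤ n) :
    (2 * n + 1) * (4 * n + 6) = (2 * n + 3) * (4 * n + 2) ∧
    Int.gcd (2 * n + 1) (4 * n + 6) = 1 ∧
    Int.gcd (2 * n + 3) (4 * n + 2) = 1 ∧
    (6 * n + 5) / (4 * n + 6) + (6 * n + 5) / (2 * n + 1) - 4
      - (4 * n + 2) / (2 * n + 3) = -1 := by
  have hp : IsCoprime (2 * n + 1) (4 * n + 6) := by
    have h := ((odd_two_mul_add_one n).isCoprime_two_mul_add_four_mul_iff 1).2 isCoprime_one_right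
    rwa [show 2 * (2 * n + 1) + 4 * 1 = 4 * n + 6 by ring] at h
  have hp' : IsCoprime (2 * n + 3) (4 * n + 2) := by
    have h := (Odd.isCoprime_two_mul_add_four_mul_iff (a := 2 * n + 3) ⟨n + 1, by ring⟩ (-1)).2
      isCoprime_one_right.neg_right
    rwa [show 2 * (2 * n + 3) + 4 * -1 = 4 * n + 2 by ring] at h
  have hq₁ : (6 * n + 5) / (4 * n + 6) = 1 :=
    (Int.ediv_eq_iff_of_pos (by omega)).2 ⟨by omega, by omega⟩
  have hq₂ : (6 * n + 5) / (2 * n + 1) = 3 :=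
    (Int.ediv_eq_iff_of_pos (by omega)).2 ⟨by omega, by omega⟩
  have hq₃ : (4 * n + 2) / (2 * n + 3) = 1 :=
    (Int.ediv_eq_iff_of_pos (by omega)).2 ⟨by omega, by omega⟩
  refine ⟨by ring, Int.isCoprime_iff_gcd_eq_one.1 hp, Int.isCoprime_iff_gcd_eq_one.1 hp', ?_⟩
  rw [hq₁, hq₂, hq₃]
  norm_num
end

section
/- Let i > 1 be an integer, g = i + 2, and let S = ⟨4, 6, 2i+1⟩ ⊆ ℤ≥0. Define f(m, t) = −2·#(S ∩ [0, m)) + (m − g)·t for integers 0 ≤ m ≤ 2g and real t ∈ [0, 1]. Then max over m ∈ {0, 1, ..., 2g} of f(m, t) equals max(f(0, t), f(4, t)) = max(−(i+2)·t, −2 + (2−i)·t) for all t ∈ [0, 1]. -/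
private lemma card_lower (i m : ℕ) (hm : 4 ≤ m) [DecidablePred fun n =>
      ∃ a b c : ℕ, n = 4 * a + 6 * b + (2 * i + 1) * c] :
    m - 2 ≤ 2 * ((Finset.range m).filter fun n =>
      ∃ a b c : ℕ, n = 4 * a + 6 * b + (2 * i + 1) * c).card := by
  have hsub : insert 0 ((Finset.Ico 2 ((m + 1) / 2)).image (fun k => 2 * k)) ⊆
      (Finset.range m).filter fun n => ∃ a b c : ℕ, n = 4 * a + 6 * b + (2 * i + 1) * c := by
    intro n hn
    simp only [Finset.mem_insert, Finset.mem_image, Finset.mem_Ico] at hn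
    rcases hn with rfl | ⟨k, ⟨hk2, hk⟩, rfl⟩
    · exact Finset.mem_filter.mpr ⟨Finset.mem_range.mpr (by omega), 0, 0, 0, by ring⟩
    · refine Finset.mem_filter.mpr ⟨Finset.mem_range.mpr (by omega), ?_⟩
      rcases Nat.even_or_odd k with ⟨a, ha⟩ | ⟨a, ha⟩
      · exact ⟨a, 0, 0, by omega⟩
      · exact ⟨a - 1, 1, 0, by omega⟩
  have h0 : (0 : ℕ) ∉ (Finset.Ico 2 ((m + 1) / 2)).image (fun k => 2 * k) := by
    simp only [Finset.mem_image, Finset.mem_Ico, not_exists]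
    rintro k ⟨⟨hk2, _⟩, hk0⟩
    omega
  have hcard : (insert 0 ((Finset.Ico 2 ((m + 1) / 2)).image (fun k => 2 * k))).card
      = 1 + ((m + 1) / 2 - 2) := by
    rw [Finset.card_insert_of_notMem h0,
      Finset.card_image_of_injective _ (fun a b h => by omega), Nat.card_Ico]
    omega
  have := Finset.card_le_card hsub
  rw [hcard] at this
  omega

private lemma aux_13 (i : ℕ) (hi : 1 < i) (t : ℝ) (ht0 : 0 ≤ t) (ht1 : t ≤ 1)
    [DecidablePred fun n => ∃ a b c : ℕ, n = 4 * a + 6 * b + (2 * i + 1) * c]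
    (f : ℕ → ℝ)
    (hf : ∀ m, f m = -2 * (((Finset.range m).filter fun n =>
          ∃ a b c : ℕ, n = 4 * a + 6 * b + (2 * i + 1) * c).card : ℝ)
        + ((m : ℝ) - ((i : ℝ) + 2)) * t)
    (hne : (Finset.range (2 * (i + 2) + 1)).Nonempty) :
    (Finset.range (2 * (i + 2) + 1)).sup' hne f = max (f 0) (f 4) ∧
      max (f 0) (f 4) = max (-((i : ℝ) + 2) * t) (-2 + (2 - (i : ℝ)) * t) := by
  have hf0 : f 0 = -((i : ℝ) + 2) * t := by
    rw [hf]; simp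
  have hfilter4 : ((Finset.range 4).filter fun n =>
      ∃ a b c : ℕ, n = 4 * a + 6 * b + (2 * i + 1) * c) = {0} := by
    ext n
    simp only [Finset.mem_filter, Finset.mem_range, Finset.mem_singleton]
    constructor
    · rintro ⟨hn, a, b, c, rfl⟩
      rcases Nat.eq_zero_or_pos c with rfl | hc
      · omega
      · have h5 := Nat.le_mul_of_pos_right (2 * i + 1) hc
        omega
    · rintro rfl
      exact ⟨by omega, 0, 0, 0, by ring⟩
  have hf4 : f 4 = -2 + (2 - (i : ℝ)) * t := by
    rw [hf, hfilter4, Finset.card_singleton]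
    push_cast
    ring
  constructor
  · apply le_antisymm
    · apply Finset.sup'_le
      intro m hm
      rw [Finset.mem_range] at hm
      rcases Nat.eq_zero_or_pos m with rfl | hm1
      · exact le_max_left _ _
      have h0mem : (0 : ℕ) ∈ (Finset.range m).filter fun n =>
          ∃ a b c : ℕ, n = 4 * a + 6 * b + (2 * i + 1) * c :=
        Finset.mem_filter.mpr ⟨Finset.mem_range.mpr hm1, 0, 0, 0, by ring⟩
      have hc1 : 1 ≤ ((Finset.range m).filter fun n =>
          ∃ a b c : ℕ, n = 4 * a + 6 * b + (2 * i + 1) * c).card :=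
        Finset.card_pos.mpr ⟨0, h0mem⟩
      have hc1' : (1 : ℝ) ≤ (((Finset.range m).filter fun n =>
          ∃ a b c : ℕ, n = 4 * a + 6 * b + (2 * i + 1) * c).card : ℝ) := by
        exact_mod_cast hc1
      refine le_trans ?_ (le_max_right _ _)
      rw [hf, hf4]
      rcases le_or_gt m 3 with h3 | h4
      · have hm4 : (m : ℝ) ≤ 4 := by exact_mod_cast le_trans h3 (by norm_num)
        nlinarith
      · have hkey := card_lower i m (by omega)
        have hkey' : (m : ℝ) - 2 ≤ 2 * (((Finset.range m).filter fun n =>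
            ∃ a b c : ℕ, n = 4 * a + 6 * b + (2 * i + 1) * c).card : ℝ) := by
          have h2 : ((m - 2 : ℕ) : ℝ) ≤ ((2 * ((Finset.range m).filter fun n =>
              ∃ a b c : ℕ, n = 4 * a + 6 * b + (2 * i + 1) * c).card : ℕ) : ℝ) := by
            exact_mod_cast hkey
          rw [Nat.cast_sub (by omega)] at h2
          push_cast at h2
          linarith
        have hm4 : (4 : ℝ) ≤ (m : ℝ) := by exact_mod_cast h4
        nlinarith
    · apply max_le
      · exact Finset.le_sup' f (Finset.mem_range.mpr (by omega))
      · exact Finset.le_sup' f (Finset.mem_range.mpr (by omega))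
  · rw [hf0, hf4]

open scoped Classical in
theorem stmt_13 (i : ℕ) (hi : 1 < i) (t : ℝ) (ht : t ∈ Set.Icc (0 : ℝ) 1) :
    letI g : ℕ := i + 2
    letI f : ℕ → ℝ := fun m =>
      -2 * (((Finset.range m).filter fun n =>
          ∃ a b c : ℕ, n = 4 * a + 6 * b + (2 * i + 1) * c).card : ℝ)
        + ((m : ℝ) - (g : ℝ)) * t
    (Finset.range (2 * g + 1)).sup' (by simp) f = max (f 0) (f 4) ∧
      max (f 0) (f 4) = max (-((i : ℝ) + 2) * t) (-2 + (2 - (i : ℝ)) * t) := by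
  refine aux_13 i hi t ht.1 ht.2 _ (fun m => ?_) _
  push_cast
  ring
end

section
/- Let i > 1 be an integer and define Υ: [0,1] → ℝ by Υ(t) = max over m ∈ {0,...,2i+4} of (−2·#(⟨4,6,2i+1⟩ ∩ [0,m)) + (m − i − 2)·t). Then Υ(t) = −(i+2)·t for t ∈ [0, 1/2] and Υ(t) = −2 + (2−i)·t for t ∈ [1/2, 1]. -/
open scoped Classical in
theorem stmt_14 (i : ℕ) (hi : 1 < i) (t : ℝ) (ht : t ∈ Set.Icc (0 : ℝ) 1) :
    letI f : ℕ → ℝ := fun m =>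
      -2 * (((Finset.range m).filter fun n =>
          ∃ a b c : ℕ, n = 4 * a + 6 * b + (2 * i + 1) * c).card : ℝ)
        + ((m : ℝ) - (i : ℝ) - 2) * t
    letI Υ : ℝ := (Finset.range (2 * i + 4 + 1)).sup' (by simp) f
    (t ≤ 1 / 2 → Υ = -((i : ℝ) + 2) * t) ∧
      (1 / 2 ≤ t → Υ = -2 + (2 - (i : ℝ)) * t) := by
  obtain ⟨ht0, ht1⟩ := ht
  set f : ℕ → ℝ := fun m =>
      -2 * (((Finset.range m).filter fun n =>
          ∃ a b c : ℕ, n = 4 * a + 6 * b + (2 * i + 1) * c).card : ℝ)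
        + ((m : ℝ) - (i : ℝ) - 2) * t with hfdef
  set g : ℕ → ℕ := fun m => ((Finset.range m).filter fun n =>
      ∃ a b c : ℕ, n = 4 * a + 6 * b + (2 * i + 1) * c).card with hg
  have hf : ∀ m, f m = -2 * (g m : ℝ) + ((m : ℝ) - (i : ℝ) - 2) * t := fun m => rfl
  have hP0 : ∃ a b c : ℕ, 0 = 4 * a + 6 * b + (2 * i + 1) * c := ⟨0, 0, 0, by ring⟩
  have heven : ∀ n : ℕ, 4 ≤ n → n % 2 = 0 →
      ∃ a b c : ℕ, n = 4 * a + 6 * b + (2 * i + 1) * c := by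
    intro n h4 h2
    rcases Nat.eq_or_lt_of_le (Nat.zero_le (n % 4)) with h | h
    · exact ⟨n / 4, 0, 0, by omega⟩
    · exact ⟨(n - 6) / 4, 1, 0, by omega⟩
  have hnot : ∀ n : ℕ, 0 < n → n < 4 →
      ¬ ∃ a b c : ℕ, n = 4 * a + 6 * b + (2 * i + 1) * c := by
    rintro n h1 h2 ⟨a, b, c, rfl⟩
    rcases c with _ | c
    · omega
    · have h5 : 2 * i + 1 ≤ (2 * i + 1) * (c + 1) :=
        Nat.le_mul_of_pos_right _ (Nat.succ_pos c)
      omega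
  have hg0 : g 0 = 0 := by simp [hg]
  have hg4 : g 4 = 1 := by
    have hsub : ((Finset.range 4).filter fun n =>
        ∃ a b c : ℕ, n = 4 * a + 6 * b + (2 * i + 1) * c) = {0} := by
      apply Finset.Subset.antisymm
      · intro n hn
        simp only [Finset.mem_filter, Finset.mem_range] at hn
        obtain ⟨hn4, hnP⟩ := hn
        simp only [Finset.mem_singleton]
        by_contra hne
        exact hnot n (Nat.pos_of_ne_zero hne) hn4 hnP
      · intro n hn
        simp only [Finset.mem_singleton] at hn
        subst hn
        simp only [Finset.mem_filter, Finset.mem_range]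
        exact ⟨by omega, hP0⟩
    simp [hg, hsub]
  have hg1 : ∀ m, 1 ≤ m → 1 ≤ g m := by
    intro m hm
    apply Finset.card_pos.mpr
    exact ⟨0, by simp only [Finset.mem_filter, Finset.mem_range]; exact ⟨by omega, hP0⟩⟩
  have hg2 : ∀ m, 5 ≤ m → 2 ≤ g m := by
    intro m hm
    have hsub : ({0, 4} : Finset ℕ) ⊆ (Finset.range m).filter fun n =>
        ∃ a b c : ℕ, n = 4 * a + 6 * b + (2 * i + 1) * c := by
      intro n hn
      simp only [Finset.mem_insert, Finset.mem_singleton] at hn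
      simp only [Finset.mem_filter, Finset.mem_range]
      rcases hn with rfl | rfl
      · exact ⟨by omega, hP0⟩
      · exact ⟨by omega, heven 4 (by omega) (by omega)⟩
    calc 2 = ({0, 4} : Finset ℕ).card := by decide
    _ ≤ _ := Finset.card_le_card hsub
  have hstep : ∀ m, 4 ≤ m → g m + 1 ≤ g (m + 2) := by
    intro m hm
    have hkey : ∀ e : ℕ, 4 ≤ e → e % 2 = 0 → m ≤ e → e < m + 2 → g m < g (m + 2) := by
      intro e h4 h2 hme hlt
      apply Finset.card_lt_card
      constructor
      · exact Finset.filter_subset_filter _ (Finset.range_subset_range.mpr (by omega))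
      · intro hcon
        have hmem' := hcon (by
          simp only [Finset.mem_filter, Finset.mem_range]
          exact ⟨hlt, heven e h4 h2⟩)
        simp only [Finset.mem_filter, Finset.mem_range] at hmem'
        omega
    by_cases h : m % 2 = 0
    · have := hkey m (by omega) h (le_refl m) (by omega); omega
    · have := hkey (m + 1) (by omega) (by omega) (by omega) (by omega); omega
  have hC : ∀ m, m ≤ 2 * g m + 2 := by
    intro m
    induction m using Nat.strong_induction_on with
    | _ m ih =>
      rcases Nat.lt_or_ge m 3 with h | h
      · omega
      rcases Nat.lt_or_ge m 5 with h5 | h5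
      · have := hg1 m (by omega); omega
      rcases Nat.lt_or_ge m 6 with h6 | h6
      · have := hg2 m (by omega); omega
      · obtain ⟨k, rfl⟩ : ∃ k, m = k + 2 := ⟨m - 2, by omega⟩
        have h1 := ih k (by omega)
        have h2 := hstep k (by omega)
        omega
  -- bound every f m by the max of the two candidate values
  have key : ∀ m ∈ Finset.range (2 * i + 4 + 1),
      f m ≤ max (-((i : ℝ) + 2) * t) (-2 + (2 - (i : ℝ)) * t) := by
    intro m hm
    rw [hf]
    rcases Nat.eq_zero_or_pos m with rfl | hmpos
    · refine le_trans (le_of_eq ?_) (le_max_left _ _)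
      rw [hg0]; push_cast; ring
    · refine le_trans ?_ (le_max_right _ _)
      have hG1 : (1 : ℝ) ≤ (g m : ℝ) := by exact_mod_cast hg1 m hmpos
      have hm2 : (m : ℝ) ≤ 2 * (g m : ℝ) + 2 := by exact_mod_cast hC m
      nlinarith [mul_nonneg (sub_nonneg.2 hG1) (sub_nonneg.2 ht1),
        mul_nonneg (sub_nonneg.2 hm2) ht0, mul_nonneg ht0 (sub_nonneg.2 hG1)]
  have hf0 : f 0 = -((i : ℝ) + 2) * t := by rw [hf, hg0]; push_cast; ring
  have hf4 : f 4 = -2 + (2 - (i : ℝ)) * t := by rw [hf, hg4]; push_cast; ring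
  constructor
  · intro hhalf
    have hmax : max (-((i : ℝ) + 2) * t) (-2 + (2 - (i : ℝ)) * t)
        = -((i : ℝ) + 2) * t := max_eq_left (by nlinarith)
    apply le_antisymm
    · exact le_of_le_of_eq (Finset.sup'_le _ f key) hmax
    · rw [← hf0]
      exact Finset.le_sup' f (Finset.mem_range.mpr (by omega))
  · intro hhalf
    have hmax : max (-((i : ℝ) + 2) * t) (-2 + (2 - (i : ℝ)) * t)
        = -2 + (2 - (i : ℝ)) * t := max_eq_right (by nlinarith)
    apply le_antisymm
    · exact le_of_le_of_eq (Finset.sup'_le _ f key) hmax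
    · rw [← hf4]
      exact Finset.le_sup' f (Finset.mem_range.mpr (by omega))
end
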